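/- arXiv:2403.14570 — 2 statements merged into one kernel-verified Lean document; each statement's English description precedes it below -/
import Mathlib

section
/- For all integers k ≥ 2 and 1 ≤ i ≤ k − 1, the following summation identity holds: Σ_{g=k−i+1}^{k−1} (−1)^{g+1} · i/(k − g + 1) · C(i − 1, g − k + i − 1) = (−1)^k (i − 1), where C(·,·) denotes the binomial coefficient and an empty sum equals 0. -/
/-!
Shifting the index to `j = g - (k - i + 1)` turns the denominator into `i - j`, and absorption
`i / (i - j) * C(i - 1, j) = C(i, j)` leaves `(-1)^(k - i)` times the alternating sum of
`C(i, j)` over `j < i - 1`. The full alternating sum vanishes, so this partial sum is minus the two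
missing terms, `(-1)^i (i - 1)`.
-/

open Finset

theorem Nat.cast_add_one_div_sub_mul_choose {K : Type*} [Field K] [CharZero K] {n j : ℕ}
    (h : j ≤ n) : ((n : K) + 1) / ((n : K) + 1 - j) * n.choose j = (n + 1).choose j := by
  have hpos : (n : K) + 1 - j ≠ 0 := by
    rw [← Nat.cast_succ, ← Nat.cast_sub (by omega)]
    exact Nat.cast_ne_zero.mpr (by omega)
  have habsorb := congrArg (Nat.cast : ℕ → K) (Nat.choose_mul_succ_eq n j)
  push_cast [Nat.cast_sub (show j ≤ n + 1 by omega)] at habsorb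
  field_simp
  linear_combination habsorb

theorem alternating_sum_range_choose_succ {R : Type*} [CommRing R] (n : ℕ) :
    ∑ j ∈ range n, (-1 : R) ^ j * (n + 1).choose j = (-1) ^ (n + 1) * n := by
  cases n with
  | zero => simp
  | succ m =>
    have h := congrArg (Int.cast : ℤ → R)
      (Int.alternating_sum_range_choose_eq_choose (n := m + 1) (m := m))
    push_cast at h
    rw [h, Nat.choose_succ_self_right]
    push_cast
    ring

theorem stmt9_general (k i : ℕ) (hi1 : 1 ≤ i) (hi2 : i ≤ k - 1) :
    ∑ g ∈ Finset.Icc (k - i + 1) (k - 1),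
        (-1 : ℝ) ^ (g + 1) * ((i : ℝ) / ((k : ℝ) - g + 1))
          * ((i - 1).choose (g + i - k - 1) : ℝ)
      = (-1 : ℝ) ^ k * ((i : ℝ) - 1) := by
  obtain ⟨n, rfl⟩ : ∃ n, i = n + 1 := ⟨i - 1, by omega⟩
  obtain ⟨m, rfl⟩ : ∃ m, k = n + 2 + m := ⟨k - (n + 2), by omega⟩
  have hIcc : Icc (n + 2 + m - (n + 1) + 1) (n + 2 + m - 1) = Ico (m + 2) (m + 2 + n) := by
    ext; simp only [mem_Icc, mem_Ico]; omega
  rw [hIcc, sum_Ico_eq_sum_range, Nat.add_sub_cancel_left]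
  calc _ = ∑ j ∈ range n, (-1 : ℝ) ^ (m + 1) * ((-1) ^ j * (n + 1).choose j) := by
        refine sum_congr rfl fun j hj => ?_
        have hj : j ≤ n := (mem_range.mp hj).le
        rw [show m + 2 + j + (n + 1) - (n + 2 + m) - 1 = j by omega, Nat.add_sub_cancel,
          ← Nat.cast_add_one_div_sub_mul_choose hj]
        push_cast
        ring
    _ = (-1 : ℝ) ^ (n + 2 + m) * ((n + 1 : ℕ) - 1) := by
        rw [← mul_sum, alternating_sum_range_choose_succ]
        push_cast
        ring

/-- For all integers `k ≥ 2` and `1 ≤ i ≤ k − 1`,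
`Σ_{g=k−i+1}^{k−1} (−1)^{g+1} i/(k−g+1) C(i−1, g−k+i−1) = (−1)^k (i−1)`
(an empty sum equals 0). -/
theorem stmt9 (k i : ℕ) (hk : 2 ≤ k) (hi1 : 1 ≤ i) (hi2 : i ≤ k - 1) :
    ∑ g ∈ Finset.Icc (k - i + 1) (k - 1),
        (-1 : ℝ) ^ (g + 1) * ((i : ℝ) / ((k : ℝ) - g + 1))
          * ((i - 1).choose (g + i - k - 1) : ℝ)
      = (-1 : ℝ) ^ k * ((i : ℝ) - 1) :=
  stmt9_general k i hi1 hi2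
end

section
/- For all integers k and h with 2 ≤ h ≤ k, the combined coefficient vanishes: Σ_{g=k−h+1}^{k−1} (−1)^{g+1} · C(h − 1, g − k + h − 1) · ((k − h + 1) + (g − k + h − 1)/(k − g + 1)) + (−1)^{k−1}(k − 1) = 0. -/
/-!
Substituting `g = k - h + 1 + j` and writing `h = m + 2`, the sum becomes
`(-1)^(k-m) Σ_{j ≤ m} (-1)^j C(m+1, j) ((k - m - 1) + j / (m + 2 - j))`.
Since `C(n, j) · j / (n + 1 - j) = C(n + 1, j) - C(n, j)`, this is a combination of partial
alternating sums of binomial coefficients, and `Σ_{j ≤ m} (-1)^j C(n+1, j) = (-1)^m C(n, m)`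
evaluates it to `(-1)^k (k - 1)`.
-/

open Finset

theorem Nat.cast_choose_mul_div_eq_cast_choose_succ_sub {K : Type*} [Field K] [CharZero K]
    {n j : ℕ} (hj : j ≤ n) :
    (n.choose j : K) * (j / (n + 1 - j)) = (n + 1).choose j - n.choose j := by
  have hpos : (n + 1 - j : K) ≠ 0 := by
    rw [← Nat.cast_succ, ← Nat.cast_sub (by omega)]
    exact_mod_cast (by omega : n + 1 - j ≠ 0)
  have key : (n.choose j : K) * (n + 1) = (n + 1).choose j * (n + 1 - j) := by
    rw [← Nat.cast_succ, ← Nat.cast_sub (by omega)]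
    exact_mod_cast Nat.choose_mul_succ_eq n j
  field_simp
  linear_combination key

theorem alternating_sum_range_choose_eq_choose {R : Type*} [CommRing R] (n m : ℕ) :
    ∑ j ∈ range (m + 1), (-1 : R) ^ j * (n + 1).choose j = (-1) ^ m * n.choose m := by
  exact_mod_cast congrArg (Int.cast : ℤ → R) Int.alternating_sum_range_choose_eq_choose

theorem alternating_sum_range_choose_mul_add_div {K : Type*} [Field K] [CharZero K]
    (m : ℕ) (a : K) :
    ∑ j ∈ range (m + 1), (-1 : K) ^ j * (m + 1).choose j * (a + j / (m + 2 - j)) =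
      (-1) ^ m * (a + m) := by
  have hterm : ∀ j ∈ range (m + 1), (-1 : K) ^ j * (m + 1).choose j * (a + j / (m + 2 - j)) =
      (-1) ^ j * (m + 1).choose j * a
        + ((-1) ^ j * (m + 1 + 1).choose j - (-1) ^ j * (m + 1).choose j) := by
    intro j hj
    have h := Nat.cast_choose_mul_div_eq_cast_choose_succ_sub (K := K) (n := m + 1)
      (mem_range.mp hj).le
    push_cast at h ⊢
    linear_combination (-1 : K) ^ j * h
  rw [sum_congr rfl hterm, sum_add_distrib, sum_sub_distrib, ← sum_mul,
    alternating_sum_range_choose_eq_choose, alternating_sum_range_choose_eq_choose,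
    Nat.choose_self, Nat.choose_succ_self_right]
  push_cast
  ring

theorem Finset.sum_Icc_int_eq_sum_range {M : Type*} [AddCommMonoid M] (f : ℤ → M) {a b : ℤ}
    {n : ℕ} (hn : a + n = b + 1) :
    ∑ g ∈ Icc a b, f g = ∑ j ∈ range n, f (a + j) := by
  symm
  apply sum_nbij' (fun j : ℕ => a + j) (fun g => (g - a).toNat) <;> intro x hx <;>
    simp_all <;> omega

theorem stmt14_general (k h : ℤ) (hh : 2 ≤ h) :
    ∑ g ∈ Finset.Icc (k - h + 1) (k - 1),
        (-1 : ℝ) ^ (g + 1) * ((h - 1).toNat.choose (g - k + h - 1).toNat : ℝ)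
          * (((k : ℝ) - (h : ℝ) + 1)
              + ((g : ℝ) - (k : ℝ) + (h : ℝ) - 1) / ((k : ℝ) - (g : ℝ) + 1))
      + (-1 : ℝ) ^ (k - 1) * ((k : ℝ) - 1)
      = 0 := by
  obtain ⟨m, rfl⟩ : ∃ m : ℕ, h = m + 2 := ⟨(h - 2).toNat, by omega⟩
  have hsign : (-1 : ℝ) ^ (k - m) * (-1) ^ m = (-1) ^ k := by
    rw [← zpow_natCast, ← zpow_add₀ (by norm_num), sub_add_cancel]
  calc _ = (-1 : ℝ) ^ (k - m) * ∑ j ∈ range (m + 1),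
          (-1) ^ j * (m + 1).choose j * ((k - m - 1 : ℝ) + j / (m + 2 - j))
        + (-1) ^ (k - 1) * ((k : ℝ) - 1) := by
        rw [sum_Icc_int_eq_sum_range _ (n := m + 1) (by push_cast; ring), mul_sum]
        congr 1
        refine sum_congr rfl fun j _ => ?_
        rw [show ((m : ℤ) + 2 - 1).toNat = m + 1 by omega,
          show (k - (m + 2) + 1 + j - k + (m + 2) - 1).toNat = j by omega,
          show k - (m + 2) + 1 + j + 1 = (k - m) + (j : ℤ) by ring,
          zpow_add₀ (by norm_num), zpow_natCast]
        push_cast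
        ring
    _ = 0 := by
        rw [alternating_sum_range_choose_mul_add_div, ← mul_assoc, hsign, zpow_sub_one₀ (by norm_num)]
        ring

/-- For all integers `k` and `h` with `2 ≤ h ≤ k`, the combined coefficient vanishes:
`Σ_{g=k−h+1}^{k−1} (−1)^{g+1} C(h−1, g−k+h−1) ((k−h+1) + (g−k+h−1)/(k−g+1))
  + (−1)^{k−1}(k−1) = 0` (the identity `S2` in the proof of Theorem 3). -/
theorem stmt14 (k h : ℤ) (hh : 2 ≤ h) (hhk : h ≤ k) :
    ∑ g ∈ Finset.Icc (k - h + 1) (k - 1),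
        (-1 : ℝ) ^ (g + 1) * ((h - 1).toNat.choose (g - k + h - 1).toNat : ℝ)
          * (((k : ℝ) - (h : ℝ) + 1)
              + ((g : ℝ) - (k : ℝ) + (h : ℝ) - 1) / ((k : ℝ) - (g : ℝ) + 1))
      + (-1 : ℝ) ^ (k - 1) * ((k : ℝ) - 1)
      = 0 :=
  stmt14_general k h hh
end
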